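/- Let Ω' ⊆ ℂ be open, and let r, α₁, α₂, β₁, β₂ : Ω' → ℂ where r is twice continuously differentiable (in the real sense), α₁ and α₂ are continuously differentiable, and r(z) ≠ 0 for every z ∈ Ω'. Assume in Ω': (i) 2 ∂_z̄ r = (α₁ − α₂) r; (ii) ∂_z̄² r = (β₁ − β₂) r − α₂ ∂_z̄ r; and (iii) 2β_j = ∂_z̄ α_j + α_j² for j = 1, 2. Then α₁² = α₂² everywhere in Ω'. -/

import Mathlib

/-!
Since (i) holds on an open set it may be differentiated once more with the product rule. Eliminating
`∂_z̄² r` with (ii), `∂_z̄ α_j` with (iii) and then `∂_z̄ r` with (i) leaves `(α₁² - α₂²) r = 0`,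
and `r` does not vanish.
-/

open Filter Topology

/-- Wirtinger derivative `∂_z̄ w = (1/2)(∂w/∂x + i ∂w/∂y)`. -/
noncomputable def dzbar (w : ℂ → ℂ) (z : ℂ) : ℂ :=
  (1 / 2 : ℂ) * (fderiv ℝ w z 1 + Complex.I * fderiv ℝ w z Complex.I)

section Wirtinger

variable {f g : ℂ → ℂ} {z : ℂ}

theorem Filter.EventuallyEq.dzbar_eq (h : f =ᶠ[𝓝 z] g) : dzbar f z = dzbar g z := by
  simp only [dzbar, h.fderiv_eq]

theorem dzbar_sub (hf : DifferentiableAt ℝ f z) (hg : DifferentiableAt ℝ g z) :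
    dzbar (fun w => f w - g w) z = dzbar f z - dzbar g z := by
  simp only [dzbar, fderiv_fun_sub hf hg, sub_apply]
  ring

theorem dzbar_const_mul (c : ℂ) (hf : DifferentiableAt ℝ f z) :
    dzbar (fun w => c * f w) z = c * dzbar f z := by
  simp only [dzbar, fderiv_const_mul hf, smul_apply, smul_eq_mul]
  ring

theorem dzbar_mul (hf : DifferentiableAt ℝ f z) (hg : DifferentiableAt ℝ g z) :
    dzbar (fun w => f w * g w) z = dzbar f z * g z + f z * dzbar g z := by
  simp only [dzbar, fderiv_fun_mul hf hg, add_apply, smul_apply, smul_eq_mul]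
  ring

theorem two_mul_dzbar_dzbar_of_eventually {r a : ℂ → ℂ}
    (h : ∀ᶠ w in 𝓝 z, 2 * dzbar r w = a w * r w)
    (ha : DifferentiableAt ℝ a z) (hr : DifferentiableAt ℝ r z) :
    2 * dzbar (dzbar r) z = dzbar a z * r z + a z * dzbar r z := by
  have hrw : dzbar r =ᶠ[𝓝 z] fun w => (1 / 2 * a w) * r w := by
    filter_upwards [h] with w hw
    linear_combination hw / 2
  rw [hrw.dzbar_eq, dzbar_mul (ha.const_mul _) hr, dzbar_const_mul _ ha]
  ring

end Wirtinger

/-- If `r` is `C²` and nonvanishing on an open `Ω' ⊆ ℂ`, `α₁, α₂` are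
`C¹`, and (i) `2∂_z̄ r = (α₁-α₂)r`, (ii) `∂_z̄²r = (β₁-β₂)r - α₂ ∂_z̄ r`, and
(iii) `2β_j = ∂_z̄ α_j + α_j²` hold in `Ω'`, then `α₁² = α₂²` in `Ω'`. -/
theorem stmt_14 (Ω' : Set ℂ) (hΩopen : IsOpen Ω')
    (r α₁ α₂ β₁ β₂ : ℂ → ℂ)
    (hr : ContDiffOn ℝ 2 r Ω')
    (hα₁ : ContDiffOn ℝ 1 α₁ Ω') (hα₂ : ContDiffOn ℝ 1 α₂ Ω')
    (hr0 : ∀ z ∈ Ω', r z ≠ 0)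
    (h1 : ∀ z ∈ Ω', 2 * dzbar r z = (α₁ z - α₂ z) * r z)
    (h2 : ∀ z ∈ Ω', dzbar (dzbar r) z = (β₁ z - β₂ z) * r z - α₂ z * dzbar r z)
    (h3 : ∀ z ∈ Ω', 2 * β₁ z = dzbar α₁ z + (α₁ z) ^ 2)
    (h4 : ∀ z ∈ Ω', 2 * β₂ z = dzbar α₂ z + (α₂ z) ^ 2) :
    ∀ z ∈ Ω', (α₁ z) ^ 2 = (α₂ z) ^ 2 := by
  intro z hz
  have hU : Ω' ∈ 𝓝 z := hΩopen.mem_nhds hz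
  have hrz : DifferentiableAt ℝ r z := (hr.contDiffAt hU).differentiableAt two_ne_zero
  have hα₁z : DifferentiableAt ℝ α₁ z := (hα₁.contDiffAt hU).differentiableAt one_ne_zero
  have hα₂z : DifferentiableAt ℝ α₂ z := (hα₂.contDiffAt hU).differentiableAt one_ne_zero
  have hrr := two_mul_dzbar_dzbar_of_eventually (eventually_of_mem hU h1) (hα₁z.sub hα₂z) hrz
  rw [dzbar_sub hα₁z hα₂z] at hrr
  refine mul_right_cancel₀ (hr0 z hz) ?_
  linear_combination 2 * hrr - 4 * h2 z hz + (α₁ z + α₂ z) * h1 z hz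
    - 2 * r z * h3 z hz + 2 * r z * h4 z hz
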